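/- arXiv:2106.06526 — 2 statements merged into one kernel-verified Lean document; each statement's English description precedes it below -/
import Mathlib

section
/- For any convex regularizer R on a convex set K in a Banach space with induced Bregman divergence D_R, and any convex differentiable function f, the implicit mirror descent update w* = argmin_{w∈K} { f(w) + D_R(w, c) } satisfies ⟨w* - d, ∇f(w*)⟩ ≤ D_R(d, c) - D_R(d, w*) - D_R(w*, c) for every d ∈ K. -/
/-! By first-order optimality, the minimizer `w*` of `f + D(·, c)` over the convex set `K`
satisfies `0 ≤ ⟪∇f(w*) + ∇R(w*) - ∇R(c), d - w*⟫` for every `d ∈ K`. The three-point identity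
of Bregman divergences rewrites `⟪∇R(w*) - ∇R(c), d - w*⟫` as
`D(d, c) - D(d, w*) - D(w*, c)`. -/

open InnerProductSpace

section Bregman

variable {E : Type*} [NormedAddCommGroup E] [InnerProductSpace ℝ E]

def bregmanDiv (R : E → ℝ) (gR : E → E) (a b : E) : ℝ :=
  R a - R b - ⟪gR b, a - b⟫_ℝ

theorem bregmanDiv_three_point (R : E → ℝ) (gR : E → E) (c w d : E) :
    bregmanDiv R gR d c - bregmanDiv R gR d w - bregmanDiv R gR w c = ⟪gR w - gR c, d - w⟫_ℝ := by
  have hsplit : d - c = (d - w) + (w - c) := by abel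
  simp only [bregmanDiv, hsplit, inner_add_right, inner_sub_left]
  ring

section Gradient

variable [CompleteSpace E] {x : E}

theorem HasGradientAt.add {f g : E → ℝ} {f' g' : E} (hf : HasGradientAt f f' x)
    (hg : HasGradientAt g g' x) : HasGradientAt (fun y => f y + g y) (f' + g') x := by
  rw [hasGradientAt_iff_hasFDerivAt, map_add]
  exact hf.hasFDerivAt.add hg.hasFDerivAt

theorem hasGradientAt_bregmanDiv_left {R : E → ℝ} {gR : E → E} (c : E)
    (hR : HasGradientAt R (gR x) x) :
    HasGradientAt (fun y => bregmanDiv R gR y c) (gR x - gR c) x := by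
  have hlin : HasFDerivAt (fun y => ⟪gR c, y - c⟫_ℝ) (toDual ℝ E (gR c)) x := by
    simpa only [inner_sub_right, toDual_apply_apply] using
      (toDual ℝ E (gR c)).hasFDerivAt.sub_const ⟪gR c, c⟫_ℝ
  rw [hasGradientAt_iff_hasFDerivAt, map_sub]
  exact (hR.hasFDerivAt.sub_const (R c)).sub hlin

theorem IsMinOn.inner_gradient_nonneg {g : E → ℝ} {g' w d : E} {K : Set E}
    (hmin : IsMinOn g K w) (hg : HasGradientAt g g' w) (hseg : segment ℝ w d ⊆ K) :
    0 ≤ ⟪g', d - w⟫_ℝ := by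
  simpa only [toDual_apply_apply] using hmin.localize.hasFDerivWithinAt_nonneg
    hg.hasFDerivAt.hasFDerivWithinAt (sub_mem_posTangentConeAt_of_segment_subset hseg)

end Gradient

end Bregman

theorem implicit_mirror_descent_three_point_general
    {E : Type*} [NormedAddCommGroup E] [InnerProductSpace ℝ E] [CompleteSpace E]
    (K : Set E) (hK : Convex ℝ K)
    (R f : E → ℝ) (gR gf : E → E)
    (hgR : ∀ x, HasGradientAt R (gR x) x)   -- gR is the gradient of R
    (hgf : ∀ x, HasGradientAt f (gf x) x)   -- gf is the gradient of f
    (D : E → E → ℝ)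
    (hD : ∀ a b, D a b = R a - R b - (inner ℝ (gR b) (a - b) : ℝ))  -- Bregman divergence
    (c wstar : E) (hw : wstar ∈ K)
    -- w* is the minimizer of f(·) + D_R(·, c) over K:
    (hmin : ∀ w ∈ K, f wstar + D wstar c ≤ f w + D w c) :
    ∀ d ∈ K, (inner ℝ (wstar - d) (gf wstar) : ℝ) ≤ D d c - D d wstar - D wstar c := by
  intro d hd
  obtain rfl : D = bregmanDiv R gR := funext fun a => funext (hD a)
  have hminOn : IsMinOn (fun w => f w + bregmanDiv R gR w c) K wstar := hmin
  have hopt : 0 ≤ ⟪gf wstar + (gR wstar - gR c), d - wstar⟫_ℝ :=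
    hminOn.inner_gradient_nonneg
      ((hgf wstar).add (hasGradientAt_bregmanDiv_left c (hgR wstar))) (hK.segment_subset hw hd)
  rw [bregmanDiv_three_point, ← neg_sub d wstar, inner_neg_left, real_inner_comm]
  rw [inner_add_left] at hopt
  linarith

/-- three-point property of the implicit mirror descent update
`w* = argmin_{w∈K} { f(w) + D_R(w, c) }` for convex differentiable `f` and a
convex differentiable regularizer `R` with Bregman divergence `D_R`. -/
theorem implicit_mirror_descent_three_point
    {E : Type*} [NormedAddCommGroup E] [InnerProductSpace ℝ E] [CompleteSpace E]
    (K : Set E) (hK : Convex ℝ K)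
    (R f : E → ℝ) (gR gf : E → E)
    (hR_conv : ConvexOn ℝ K R) (hf_conv : ConvexOn ℝ K f)
    (hgR : ∀ x, HasGradientAt R (gR x) x)   -- gR is the gradient of R
    (hgf : ∀ x, HasGradientAt f (gf x) x)   -- gf is the gradient of f
    (D : E → E → ℝ)
    (hD : ∀ a b, D a b = R a - R b - (inner ℝ (gR b) (a - b) : ℝ))  -- Bregman divergence
    (c wstar : E) (hc : c ∈ K) (hw : wstar ∈ K)
    -- w* is the minimizer of f(·) + D_R(·, c) over K:
    (hmin : ∀ w ∈ K, f wstar + D wstar c ≤ f w + D w c) :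
    ∀ d ∈ K, (inner ℝ (wstar - d) (gf wstar) : ℝ) ≤ D d c - D d wstar - D wstar c :=
  implicit_mirror_descent_three_point_general K hK R f gR gf hgR hgf D hD c wstar hw hmin
end

section
/- (Regret corollary, general case) With η = σ^{4/3} α*^{-2/3} V_T^{1/3} T^{-1/3} (assumed ≤ 1/(4(LD+G))), the dynamic regret of OSAMD in the non-separable case is O(σ^{-2} C_T + σ^{-2/3} α*^{1/3} V_T^{1/3} T^{2/3} + σ^{-1} α* T), treating G, L, D, F, γ, ε_w, ε_v as constants. -/
private lemma amgm13 (x y : ℝ) (hx : 0 ≤ x) (hy : 0 ≤ y) :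
    x ^ ((1:ℝ)/3) * y ^ ((2:ℝ)/3) ≤ x + y := by
  rcases le_total x y with h | h
  · calc x ^ ((1:ℝ)/3) * y ^ ((2:ℝ)/3)
        ≤ y ^ ((1:ℝ)/3) * y ^ ((2:ℝ)/3) := by gcongr
      _ = y ^ ((1:ℝ)/3 + (2:ℝ)/3) := (Real.rpow_add' hy (by norm_num)).symm
      _ = y := by norm_num
      _ ≤ x + y := le_add_of_nonneg_left hx
  · calc x ^ ((1:ℝ)/3) * y ^ ((2:ℝ)/3)
        ≤ x ^ ((1:ℝ)/3) * x ^ ((2:ℝ)/3) := by gcongr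
      _ = x ^ ((1:ℝ)/3 + (2:ℝ)/3) := (Real.rpow_add' hx (by norm_num)).symm
      _ = x := by norm_num
      _ ≤ x + y := le_add_of_nonneg_right hy

set_option maxHeartbeats 1000000 in
/-- regret corollary, general case: treating `G, L, D, F, γ, ε_w,
ε_v` as constants and choosing `η = σ^{4/3} α*^{-2/3} V_T^{1/3} T^{-1/3}` (assumed
`≤ 1/(4(LD+G))`), the dynamic regret bound of OSAMD is
`O(σ⁻² C_T + σ^{-2/3} α*^{1/3} V_T^{1/3} T^{2/3} + σ⁻¹ α* T)`. -/
theorem regret_corollary_general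
    (G L Dd F γ εw εv R : ℝ)
    (hG : 0 < G) (hL : 0 ≤ L) (hDd : 0 < Dd) (hF : 0 < F) (hγ : 0 < γ)
    (hεw : 0 ≤ εw) (hεv : 0 ≤ εv) (hR : 0 < R) :
    ∃ c : ℝ, 0 < c ∧
      ∀ (σ α C_T V_T : ℝ) (T : ℕ), 0 < σ → σ ≤ R → 0 < α → 1 ≤ C_T → 1 ≤ V_T → 1 ≤ T →
      ∀ η : ℝ,
        η = σ ^ ((4 : ℝ) / 3) * α ^ (-(2 : ℝ) / 3) * V_T ^ ((1 : ℝ) / 3)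
              * (T : ℝ) ^ (-(1 : ℝ) / 3) →
        η ≤ 1 / (4 * (L * Dd + G)) →
        4 * (η * G ^ 4 + G ^ 3 * Dd) / σ ^ 2 * (γ * C_T + εv + σ / G ^ 2 * T * α)
            + (εw + γ * Dd) / η + 4 * Real.sqrt (γ * Dd * T * F * V_T / η)
          ≤ c * (C_T / σ ^ 2
              + σ ^ (-(2 : ℝ) / 3) * α ^ ((1 : ℝ) / 3) * V_T ^ ((1 : ℝ) / 3)
                  * (T : ℝ) ^ ((2 : ℝ) / 3)
              + α * T / σ) := by
  set K : ℝ := G ^ 3 * (1/4 + Dd) with hK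
  have hKpos : 0 < K := by positivity
  refine ⟨4 * K * (γ + εv) + 4 * K / G ^ 2 + (εw + γ * Dd) + 4 * Real.sqrt (γ * Dd * F) + 1,
    by positivity, ?_⟩
  intro σ α C_T V_T T hσ hσR hα hC hV hT η hη hηle
  have hT0 : (0:ℝ) < T := by exact_mod_cast hT
  have hT1 : (1:ℝ) ≤ T := by exact_mod_cast hT
  have hV0 : (0:ℝ) < V_T := lt_of_lt_of_le one_pos hV
  have hC0 : (0:ℝ) < C_T := lt_of_lt_of_le one_pos hC
  have hηpos : 0 < η := by rw [hη]; positivity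
  set A : ℝ := C_T / σ ^ 2 with hA
  set B : ℝ := σ ^ (-(2 : ℝ) / 3) * α ^ ((1 : ℝ) / 3) * V_T ^ ((1 : ℝ) / 3)
      * (T : ℝ) ^ ((2 : ℝ) / 3) with hB
  set E : ℝ := α * T / σ with hE
  have hApos : 0 < A := by positivity
  have hBpos : 0 < B := by positivity
  have hEpos : 0 < E := by positivity
  -- 1/η identity
  have hinv : 1 / η
      = σ ^ (-(4 : ℝ) / 3) * α ^ ((2 : ℝ) / 3) * V_T ^ (-(1 : ℝ) / 3)
        * (T : ℝ) ^ ((1 : ℝ) / 3) := by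
    rw [hη, show -(4:ℝ)/3 = -(4/3) by ring, show -(2:ℝ)/3 = -(2/3) by ring,
        show -(1:ℝ)/3 = -(1/3) by ring,
        Real.rpow_neg hσ.le, Real.rpow_neg hα.le, Real.rpow_neg hV0.le, Real.rpow_neg hT0.le]
    have h1 : σ ^ ((4:ℝ)/3) ≠ 0 := by positivity
    have h2 : α ^ ((2:ℝ)/3) ≠ 0 := by positivity
    have h3 : V_T ^ ((1:ℝ)/3) ≠ 0 := by positivity
    have h4 : (T:ℝ) ^ ((1:ℝ)/3) ≠ 0 := by positivity
    field_simp
  -- Term 1 bound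
  have hηG : η * G ^ 4 ≤ G ^ 3 / 4 := by
    have h1 : η ≤ 1 / (4 * G) := le_trans hηle (by
      apply one_div_le_one_div_of_le (by positivity)
      nlinarith [mul_nonneg hL hDd.le])
    calc η * G ^ 4 ≤ (1 / (4 * G)) * G ^ 4 := by
          apply mul_le_mul_of_nonneg_right h1 (by positivity)
      _ = G ^ 3 / 4 := by field_simp
  have hterm1 : 4 * (η * G ^ 4 + G ^ 3 * Dd) / σ ^ 2 * (γ * C_T + εv + σ / G ^ 2 * T * α)
      ≤ 4 * K * (γ + εv) * A + (4 * K / G ^ 2) * E := by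
    have hKb : η * G ^ 4 + G ^ 3 * Dd ≤ K := by rw [hK]; nlinarith
    have step1 : 4 * (η * G ^ 4 + G ^ 3 * Dd) / σ ^ 2 * (γ * C_T + εv + σ / G ^ 2 * T * α)
        ≤ 4 * K / σ ^ 2 * (γ * C_T + εv + σ / G ^ 2 * T * α) := by
      have h0 : 0 ≤ γ * C_T + εv + σ / G ^ 2 * T * α := by positivity
      gcongr
    have step2 : 4 * K / σ ^ 2 * (γ * C_T + εv + σ / G ^ 2 * T * α)
        = 4 * K * γ * (C_T / σ ^ 2) + 4 * K * εv * (1 / σ ^ 2)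
          + (4 * K / G ^ 2) * (α * T / σ) := by
      field_simp
    have step3 : 4 * K * εv * (1 / σ ^ 2) ≤ 4 * K * εv * (C_T / σ ^ 2) := by
      gcongr
    calc 4 * (η * G ^ 4 + G ^ 3 * Dd) / σ ^ 2 * (γ * C_T + εv + σ / G ^ 2 * T * α)
        ≤ 4 * K * γ * (C_T / σ ^ 2) + 4 * K * εv * (1 / σ ^ 2)
          + (4 * K / G ^ 2) * (α * T / σ) := by rw [← step2]; exact step1
      _ ≤ 4 * K * γ * A + 4 * K * εv * A + (4 * K / G ^ 2) * E := by
          rw [hA, hE]; exact add_le_add (add_le_add le_rfl step3) le_rfl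
      _ = 4 * K * (γ + εv) * A + (4 * K / G ^ 2) * E := by ring
  -- Term 2 bound : 1/η ≤ A + E
  have hinvle : 1 / η ≤ A + E := by
    have s1 : 1 / η ≤ σ ^ (-(4 : ℝ) / 3) * α ^ ((2 : ℝ) / 3) * (T : ℝ) ^ ((2 : ℝ) / 3) := by
      rw [hinv]
      have hVle : V_T ^ (-(1:ℝ)/3) ≤ 1 :=
        Real.rpow_le_one_of_one_le_of_nonpos hV (by norm_num)
      have hTle : (T:ℝ) ^ ((1:ℝ)/3) ≤ (T:ℝ) ^ ((2:ℝ)/3) :=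
        Real.rpow_le_rpow_of_exponent_le hT1 (by norm_num)
      calc σ ^ (-(4:ℝ)/3) * α ^ ((2:ℝ)/3) * V_T ^ (-(1:ℝ)/3) * (T:ℝ) ^ ((1:ℝ)/3)
          ≤ σ ^ (-(4:ℝ)/3) * α ^ ((2:ℝ)/3) * 1 * (T:ℝ) ^ ((2:ℝ)/3) := by
            have h1 : (0:ℝ) ≤ σ ^ (-(4:ℝ)/3) * α ^ ((2:ℝ)/3) := by positivity
            exact mul_le_mul (mul_le_mul_of_nonneg_left hVle h1) hTle (by positivity)
              (by positivity)
        _ = σ ^ (-(4:ℝ)/3) * α ^ ((2:ℝ)/3) * (T:ℝ) ^ ((2:ℝ)/3) := by ring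
    have e1 : ((σ ^ 2)⁻¹ : ℝ) ^ ((1:ℝ)/3) = σ ^ (-(2:ℝ)/3) := by
      rw [← Real.rpow_natCast σ 2, ← Real.rpow_neg hσ.le, ← Real.rpow_mul hσ.le]
      norm_num
    have e2 : (α * T / σ) ^ ((2:ℝ)/3)
        = α ^ ((2:ℝ)/3) * (T:ℝ) ^ ((2:ℝ)/3) * σ ^ (-(2:ℝ)/3) := by
      rw [Real.div_rpow (by positivity) hσ.le, Real.mul_rpow hα.le hT0.le,
          div_eq_mul_inv, ← Real.rpow_neg hσ.le]
      norm_num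
    have s2 : σ ^ (-(4 : ℝ) / 3) * α ^ ((2 : ℝ) / 3) * (T : ℝ) ^ ((2 : ℝ) / 3)
        = ((σ ^ 2)⁻¹) ^ ((1:ℝ)/3) * (α * T / σ) ^ ((2:ℝ)/3) := by
      rw [e1, e2, show σ ^ (-(2:ℝ)/3) * (α ^ ((2:ℝ)/3) * (T:ℝ) ^ ((2:ℝ)/3) * σ ^ (-(2:ℝ)/3))
          = (σ ^ (-(2:ℝ)/3) * σ ^ (-(2:ℝ)/3)) * (α ^ ((2:ℝ)/3) * (T:ℝ) ^ ((2:ℝ)/3)) by ring,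
        ← Real.rpow_add hσ]
      norm_num
      ring
    have s3 : ((σ ^ 2)⁻¹) ^ ((1:ℝ)/3) * (α * T / σ) ^ ((2:ℝ)/3) ≤ (σ ^ 2)⁻¹ + α * T / σ :=
      amgm13 _ _ (by positivity) (by positivity)
    have s4 : (σ ^ 2)⁻¹ ≤ A := by
      rw [hA, inv_eq_one_div]
      gcongr
    calc 1 / η ≤ ((σ ^ 2)⁻¹) ^ ((1:ℝ)/3) * (α * T / σ) ^ ((2:ℝ)/3) := by rw [← s2]; exact s1
      _ ≤ (σ ^ 2)⁻¹ + α * T / σ := s3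
      _ ≤ A + E := by rw [hE]; exact add_le_add s4 le_rfl
  have hterm2 : (εw + γ * Dd) / η ≤ (εw + γ * Dd) * (A + E) := by
    rw [div_eq_mul_one_div]
    exact mul_le_mul_of_nonneg_left hinvle (by positivity)
  -- Term 3 : sqrt equality
  have hBsq : B ^ 2 = σ ^ (-(4:ℝ)/3) * α ^ ((2:ℝ)/3) * V_T ^ ((2:ℝ)/3) * (T:ℝ) ^ ((4:ℝ)/3) := by
    rw [hB, sq]
    rw [show (σ ^ (-(2:ℝ)/3) * α ^ ((1:ℝ)/3) * V_T ^ ((1:ℝ)/3) * (T:ℝ) ^ ((2:ℝ)/3))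
          * (σ ^ (-(2:ℝ)/3) * α ^ ((1:ℝ)/3) * V_T ^ ((1:ℝ)/3) * (T:ℝ) ^ ((2:ℝ)/3))
        = (σ ^ (-(2:ℝ)/3) * σ ^ (-(2:ℝ)/3)) * ((α ^ ((1:ℝ)/3) * α ^ ((1:ℝ)/3))
          * ((V_T ^ ((1:ℝ)/3) * V_T ^ ((1:ℝ)/3)) * ((T:ℝ) ^ ((2:ℝ)/3) * (T:ℝ) ^ ((2:ℝ)/3))))
        by ring,
      ← Real.rpow_add hσ, ← Real.rpow_add hα, ← Real.rpow_add hV0, ← Real.rpow_add hT0]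
    norm_num
    ring
  have harg : γ * Dd * T * F * V_T / η = (γ * Dd * F) * B ^ 2 := by
    rw [show γ * Dd * T * F * V_T / η = (γ * Dd * F) * ((T:ℝ) * V_T * (1 / η)) by ring,
        hinv, hBsq]
    rw [show (T:ℝ) * V_T * (σ ^ (-(4:ℝ)/3) * α ^ ((2:ℝ)/3) * V_T ^ (-(1:ℝ)/3) * (T:ℝ) ^ ((1:ℝ)/3))
        = σ ^ (-(4:ℝ)/3) * α ^ ((2:ℝ)/3) * (V_T ^ (1:ℝ) * V_T ^ (-(1:ℝ)/3))
          * ((T:ℝ) ^ (1:ℝ) * (T:ℝ) ^ ((1:ℝ)/3)) by rw [Real.rpow_one, Real.rpow_one]; ring,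
      ← Real.rpow_add hV0, ← Real.rpow_add hT0]
    norm_num
  have hterm3 : 4 * Real.sqrt (γ * Dd * T * F * V_T / η) = 4 * Real.sqrt (γ * Dd * F) * B := by
    rw [harg, Real.sqrt_mul (by positivity), Real.sqrt_sq hBpos.le]
    ring
  -- combine
  have hsq : 0 ≤ Real.sqrt (γ * Dd * F) := Real.sqrt_nonneg _
  calc 4 * (η * G ^ 4 + G ^ 3 * Dd) / σ ^ 2 * (γ * C_T + εv + σ / G ^ 2 * T * α)
        + (εw + γ * Dd) / η + 4 * Real.sqrt (γ * Dd * T * F * V_T / η)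
      ≤ (4 * K * (γ + εv) * A + (4 * K / G ^ 2) * E) + (εw + γ * Dd) * (A + E)
        + 4 * Real.sqrt (γ * Dd * F) * B := by
        rw [hterm3]; exact add_le_add (add_le_add hterm1 hterm2) le_rfl
    _ ≤ (4 * K * (γ + εv) + 4 * K / G ^ 2 + (εw + γ * Dd) + 4 * Real.sqrt (γ * Dd * F) + 1)
        * (A + B + E) := by
        have h1 : 0 ≤ 4 * K * (γ + εv) := by positivity
        have h2 : 0 ≤ 4 * K / G ^ 2 := by positivity
        have h3 : 0 ≤ εw + γ * Dd := by positivity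
        nlinarith [mul_pos hApos hBpos, mul_pos hBpos hEpos, mul_pos hApos hEpos,
          mul_nonneg h1 hBpos.le, mul_nonneg h1 hEpos.le, mul_nonneg h2 hApos.le,
          mul_nonneg h2 hBpos.le, mul_nonneg h3 hBpos.le,
          mul_nonneg (mul_nonneg (by norm_num : (0:ℝ) ≤ 4) hsq) hApos.le,
          mul_nonneg (mul_nonneg (by norm_num : (0:ℝ) ≤ 4) hsq) hEpos.le]
end
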